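/- Every topological space embeds in a pseudoradial space. -/

import Mathlib

open Filter Topology

universe u

/-- The two points of the Sierpiński space. -/
inductive SPt : Type
  | zero
  | one
deriving DecidableEq

/-- The Sierpiński topology: `{zero}` is open, `{one}` is not. -/
instance : TopologicalSpace SPt := TopologicalSpace.generateFrom {{SPt.zero}}

/-- `A` is closed under limits of `o`-indexed transfinite sequences for all infinite
ordinals `o ≤ β` (β an infinite cardinal, viewed as an ordinal). -/
def OrdSeqClosed {X : Type u} [TopologicalSpace X] (β : Cardinal.{u}) (A : Set X) : Prop :=
  ∀ o : Ordinal.{u}, Ordinal.omega0 ≤ o → o ≤ β.ord →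
    ∀ f : o.ToType → X, (∀ i, f i ∈ A) →
    ∀ x : X, Filter.Tendsto f Filter.atTop (nhds x) → x ∈ A

/-- A space is β-sequential if every such subset is closed. -/
def IsBetaSequential (X : Type u) [TopologicalSpace X] (β : Cardinal.{u}) : Prop :=
  ∀ A : Set X, OrdSeqClosed β A → IsClosed A

/-- `A` contains limits of all convergent transfinite sequences of its points. -/
def TransSeqClosed {X : Type u} [TopologicalSpace X] (A : Set X) : Prop :=
  ∀ o : Ordinal.{u}, Ordinal.omega0 ≤ o →
    ∀ f : o.ToType → X, (∀ i, f i ∈ A) →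
    ∀ x : X, Filter.Tendsto f Filter.atTop (nhds x) → x ∈ A

/-- Pseudoradial space. -/
def IsPseudoradial (X : Type u) [TopologicalSpace X] : Prop :=
  ∀ A : Set X, TransSeqClosed A → IsClosed A

/-!
A space `X` embeds, via `x ↦ {S | x ∈ S}`, into `Set (Set X)` with the topology pulled back from
the Sierpiński cube `Opens X → Prop` along `s ↦ (U ↦ U ∈ s)`; the coordinates `{x}` make the map
injective. Pulling back along a surjection preserves pseudoradiality, so it suffices that Sierpiński
cubes are pseudoradial. There a transfinite-sequentially closed set `B` is closed downwards, and a
point `z` of its closure lies in `B` by induction on `κ = #{i | z i}`: if `κ` is finite, some point of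
`B` lies above `z`; otherwise, enumerating `{i | z i}` in order type `κ.ord`, the initial segments
form a `κ.ord`-sequence of points of smaller support in the closure of `B` converging to `z`.
-/

open Cardinal TopologicalSpace

section TransSeqClosed

variable {Y Z : Type u} [TopologicalSpace Y] [TopologicalSpace Z]

theorem IsClosed.transSeqClosed {A : Set Y} (hA : IsClosed A) : TransSeqClosed A := by
  intro o ho f hf x hx
  have : Nonempty o.ToType :=
    Ordinal.nonempty_toType_iff.2 (Ordinal.omega0_pos.trans_le ho).ne'
  exact hA.mem_of_tendsto hx (Eventually.of_forall hf)

theorem Topology.IsInducing.isPseudoradial {f : Y → Z} (hf : IsInducing f)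
    (hsurj : Function.Surjective f) (hZ : IsPseudoradial Z) : IsPseudoradial Y := by
  intro B hB
  have hsat : f ⁻¹' (f '' B) = B := by
    refine Set.Subset.antisymm ?_ (Set.subset_preimage_image f B)
    rintro y ⟨b, hb, hby⟩
    exact hB _ le_rfl (fun _ => b) (fun _ => hb) y
      (hf.tendsto_nhds_iff.2 (by simpa [Function.comp_def, hby] using tendsto_const_nhds))
  have himage : TransSeqClosed (f '' B) := by
    intro o ho g hg z hz
    choose b hbB hb using hg
    obtain ⟨y, rfl⟩ := hsurj z
    refine ⟨y, hB o ho b hbB y (hf.tendsto_nhds_iff.2 ?_), rfl⟩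
    simpa [Function.comp_def, hb] using hz
  rw [← hsat]
  exact (hZ _ himage).preimage hf.continuous

end TransSeqClosed

section SierpinskiCube

variable {ι : Type u}

theorem tendsto_nhds_pi_Prop {α : Type*} {l : Filter α} {w : α → ι → Prop} {z : ι → Prop} :
    Tendsto w l (𝓝 z) ↔ ∀ i, z i → ∀ᶠ a in l, w a i := by
  simp only [tendsto_pi_nhds, tendsto_nhds_Prop]

theorem TransSeqClosed.mem_of_le {B : Set (ι → Prop)} (hB : TransSeqClosed B)
    {y z : ι → Prop} (hy : y ∈ B) (hzy : z ≤ y) : z ∈ B :=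
  hB _ le_rfl (fun _ => y) (fun _ => hy) z
    (tendsto_nhds_pi_Prop.2 fun i hi => Eventually.of_forall fun _ => hzy i hi)

theorem TransSeqClosed.mem_of_mem_closure_of_finite {B : Set (ι → Prop)} (hB : TransSeqClosed B)
    {z : ι → Prop} (hz : z ∈ closure B) (hfin : {i | z i}.Finite) : z ∈ B := by
  have hnhds : ∀ᶠ y in 𝓝 z, ∀ i ∈ {i | z i}, y i :=
    (eventually_all_finite hfin).2 fun i hi => tendsto_nhds_pi_Prop.1 tendsto_id i hi
  obtain ⟨y, hzy, hy⟩ := (hnhds.and_frequently (mem_closure_iff_frequently.1 hz)).exists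
  exact hB.mem_of_le hy hzy

theorem exists_tendsto_of_aleph0_le_mk {z : ι → Prop} (hz : ℵ₀ ≤ #{i | z i}) :
    ∃ w : (#{i | z i}).ord.ToType → ι → Prop,
      (∀ ξ, w ξ ≤ z ∧ #{i | w ξ i} < #{i | z i}) ∧ Tendsto w atTop (𝓝 z) := by
  have : NoMaxOrder (#{i | z i}).ord.ToType := Cardinal.noMaxOrder hz
  obtain ⟨b⟩ : Nonempty ((#{i | z i}).ord.ToType ≃ {i | z i}) := by
    rw [← Cardinal.eq, mk_toType, card_ord]
  refine ⟨fun ξ i => ∃ hi : z i, b.symm ⟨i, hi⟩ < ξ, fun ξ => ⟨fun i hi => hi.1, ?_⟩, ?_⟩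
  · have hξ : #(Set.Iio ξ) < #{i | z i} := by simpa using mk_Iio_lt ξ
    refine lt_of_le_of_lt (mk_le_of_injective (f := fun i : {i | ∃ hi : z i, b.symm ⟨i, hi⟩ < ξ} =>
      (⟨b.symm ⟨i, i.2.1⟩, i.2.2⟩ : Set.Iio ξ)) fun i j hij => ?_) hξ
    exact Subtype.ext (by simpa using b.symm.injective (Subtype.ext_iff.1 hij))
  · exact tendsto_nhds_pi_Prop.2 fun i hi =>
      (eventually_gt_atTop (b.symm ⟨i, hi⟩)).mono fun _ hξ => ⟨hi, hξ⟩

theorem TransSeqClosed.mem_of_mem_closure {B : Set (ι → Prop)} (hB : TransSeqClosed B)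
    {z : ι → Prop} (hz : z ∈ closure B) : z ∈ B := by
  induction hc : #{i | z i} using WellFoundedLT.induction generalizing z with
  | _ c ih =>
  rcases lt_or_ge c ℵ₀ with hfin | hinf
  · exact hB.mem_of_mem_closure_of_finite hz (lt_aleph0_iff_set_finite.1 (hc ▸ hfin))
  · obtain ⟨w, hw, hwz⟩ := exists_tendsto_of_aleph0_le_mk (hc ▸ hinf)
    refine hB _ (omega0_le_ord.2 (hc ▸ hinf)) w (fun ξ => ?_) z hwz
    exact ih _ (hc ▸ (hw ξ).2) (isClosed_closure.transSeqClosed.mem_of_le hz (hw ξ).1) rfl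

theorem isPseudoradial_pi_Prop (ι : Type u) : IsPseudoradial (ι → Prop) := fun _ hB =>
  closure_subset_iff_isClosed.1 fun _ hz => hB.mem_of_mem_closure hz

end SierpinskiCube

/-- Every topological space embeds in a pseudoradial space. -/
theorem embeds_in_pseudoradial (X : Type u) [TopologicalSpace X] :
    ∃ (Y : Type u) (tY : TopologicalSpace Y), @IsPseudoradial Y tY ∧
      ∃ e : X → Y, @Topology.IsEmbedding X Y _ tY e := by
  let restrict : Set (Set X) → (Opens X → Prop) := fun s U => (U : Set X) ∈ s
  let : TopologicalSpace (Set (Set X)) := .induced restrict inferInstance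
  have hrestrict : Function.Surjective restrict := fun q =>
    ⟨{S | ∃ hS : IsOpen S, q ⟨S, hS⟩}, funext fun U => propext ⟨fun ⟨_, h⟩ => h, fun h => ⟨U.2, h⟩⟩⟩
  refine ⟨Set (Set X), inferInstance,
    (IsInducing.induced restrict).isPseudoradial hrestrict (isPseudoradial_pi_Prop _),
    fun x => {S | x ∈ S}, ⟨?_, fun x y hxy => ?_⟩⟩
  · exact ((IsInducing.induced restrict).of_comp_iff).1 (productOfMemOpens_isInducing X)
  · simpa using ((Set.ext_iff.1 hxy {x}).1 rfl).symm
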